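/- arXiv:1405.6532 — 2 statements merged into one kernel-verified Lean document; each statement's English description precedes it below -/
import Mathlib

section
/- Let g be a finite-dimensional real Lie algebra with structure constants Cᵞ_{αβ} in a basis {e_α}, and let L : g → ℝ be a smooth Lagrangian with trajectory y : ℝ → g solving the Euler–Poincaré equations d/dt (∂L/∂y^β) = (∂L/∂y^γ) Cᵞ_{αβ} y^α. If for a fixed constant a ∈ g the function t ↦ a^β (∂L/∂y^β)(y(t)) is bounded and its time-averaged derivative exists, then ⟨(∂L/∂y^γ) Cᵞ_{αβ} y^α a^β⟩ = 0. -/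
open Filter MeasureTheory intervalIntegral Finset

/-- Lagrangian-side virial theorem on a Lie algebra (Lie algebroid over a point):
if `y` solves the Euler–Poincaré equations `d/dt(∂L/∂y^β) = (∂L/∂y^γ) Cᵞ_{αβ} y^α`
and the virial function `t ↦ a^β (∂L/∂y^β)(y(t))` is bounded for a fixed `a`, then
(if the time average exists) `⟨(∂L/∂y^γ) Cᵞ_{αβ} y^α a^β⟩ = 0`. -/
theorem euler_poincare_virial (n : ℕ)
    (C : Fin n → Fin n → Fin n → ℝ)   -- structure constants Cᵞ_{αβ} = C γ α β
    (hCanti : ∀ γ' α β, C γ' α β = - C γ' β α)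
    (L : (Fin n → ℝ) → ℝ) (hL : ContDiff ℝ (⊤ : ℕ∞) L)
    (y : ℝ → Fin n → ℝ)
    (hEP : ∀ t β, HasDerivAt (fun s => (fderiv ℝ L (y s)) (Pi.single β 1))
      (∑ γ', ∑ α, (fderiv ℝ L (y t)) (Pi.single γ' 1) * C γ' α β * y t α) t)
    (a : Fin n → ℝ)
    (hbdd : ∃ K : ℝ, ∀ t : ℝ, |∑ β, a β * (fderiv ℝ L (y t)) (Pi.single β 1)| ≤ K)
    (A : ℝ)
    (hA : Tendsto (fun T : ℝ => (1 / T) * ∫ t in (0:ℝ)..T,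
      ∑ γ', ∑ α, ∑ β, (fderiv ℝ L (y t)) (Pi.single γ' 1) * C γ' α β * y t α * a β)
      atTop (nhds A)) :
    A = 0 := by
  obtain ⟨K, hK⟩ := hbdd
  set G : ℝ → ℝ := fun t => ∑ β, a β * (fderiv ℝ L (y t)) (Pi.single β 1) with hGdef
  set F : ℝ → ℝ := fun t => ∑ γ', ∑ α, ∑ β,
      (fderiv ℝ L (y t)) (Pi.single γ' 1) * C γ' α β * y t α * a β with hFdef
  have hG : ∀ t, HasDerivAt G (F t) t := by
    intro t
    have h := HasDerivAt.sum (fun β (_ : β ∈ Finset.univ) => ((hEP t β).const_mul (a β)))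
    have key : F t = ∑ β, a β * ∑ γ', ∑ α,
        (fderiv ℝ L (y t)) (Pi.single γ' 1) * C γ' α β * y t α := by
      simp only [hFdef]
      calc (∑ γ', ∑ α, ∑ β, (fderiv ℝ L (y t)) (Pi.single γ' 1) * C γ' α β * y t α * a β)
          = ∑ γ', ∑ β, ∑ α, (fderiv ℝ L (y t)) (Pi.single γ' 1) * C γ' α β * y t α * a β :=
            Finset.sum_congr rfl (fun γ' _ => Finset.sum_comm)
        _ = ∑ β, ∑ γ', ∑ α, (fderiv ℝ L (y t)) (Pi.single γ' 1) * C γ' α β * y t α * a β :=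
            Finset.sum_comm
        _ = ∑ β, a β * ∑ γ', ∑ α, (fderiv ℝ L (y t)) (Pi.single γ' 1) * C γ' α β * y t α := by
            refine Finset.sum_congr rfl fun β _ => ?_
            rw [Finset.mul_sum]
            refine Finset.sum_congr rfl fun γ' _ => ?_
            rw [Finset.mul_sum]
            exact Finset.sum_congr rfl fun α _ => by ring
    rw [key]
    exact h.congr_of_eventuallyEq (Filter.Eventually.of_forall fun s => by simp only [hGdef, Finset.sum_apply])
  have hbound : ∀ T : ℝ, |∫ t in (0:ℝ)..T, F t| ≤ 2 * K := by
    intro T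
    by_cases h : IntervalIntegrable F MeasureTheory.volume 0 T
    · rw [intervalIntegral.integral_eq_sub_of_hasDerivAt (fun t _ => hG t) h]
      calc |G T - G 0| ≤ |G T| + |G 0| := abs_sub _ _
        _ ≤ K + K := add_le_add (hK T) (hK 0)
        _ = 2 * K := by ring
    · rw [intervalIntegral.integral_undef h]
      have := (abs_nonneg (G 0)).trans (hK 0)
      simpa using by linarith
  have h0 : Tendsto (fun T : ℝ => (1 / T) * ∫ t in (0:ℝ)..T, F t) atTop (nhds 0) := by
    refine squeeze_zero_norm' (a := fun T : ℝ => (2 * K) / T) ?_ ?_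
    · filter_upwards [eventually_gt_atTop (0 : ℝ)] with T hT
      rw [Real.norm_eq_abs, abs_mul, abs_of_pos (by positivity : (0:ℝ) < 1 / T)]
      rw [one_div, div_eq_inv_mul]
      exact mul_le_mul_of_nonneg_left (hbound T) (by positivity)
    · exact tendsto_const_nhds.div_atTop tendsto_id
  exact tendsto_nhds_unique hA h0
end

section
/- Let L(q,v) = (1/2) vᵀ M(q) v − V(q) be a regular mechanical Lagrangian on ℝⁿ (M(q) symmetric positive definite), and D = fⁱ(q) ∂/∂qᵢ a vector field with complete lift D^c = fⁱ ∂/∂qᵢ + vʲ(∂fⁱ/∂qʲ) ∂/∂vᵢ on the tangent bundle. Along any bounded solution q(t) of the Euler–Lagrange equations (with bounded velocity, and assuming the limits exist), ⟨D^c(T)⟩ = ⟨D(V)⟩, where T(q,v) = (1/2) vᵀ M(q) v. -/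
open Filter MeasureTheory intervalIntegral Finset

lemma virial_quad_hasFDerivAt {n : ℕ} (c : Matrix (Fin n) (Fin n) ℝ) (w : Fin n → ℝ) :
    HasFDerivAt (fun x : Fin n → ℝ => (1/2 : ℝ) * ∑ a, ∑ b, x a * c a b * x b)
      ((1/2 : ℝ) • ∑ a : Fin n, ∑ b : Fin n,
        ((w a * c a b) • ContinuousLinearMap.proj b
          + w b • ((c a b) • ContinuousLinearMap.proj (R := ℝ) (φ := fun _ : Fin n => ℝ) a))) w := by
  apply HasFDerivAt.const_mul
  apply HasFDerivAt.fun_sum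
  intro a _
  apply HasFDerivAt.fun_sum
  intro b _
  exact (((ContinuousLinearMap.proj (R := ℝ) (φ := fun _ : Fin n => ℝ) a).hasFDerivAt).mul_const
    (c a b)).mul ((ContinuousLinearMap.proj (R := ℝ) (φ := fun _ : Fin n => ℝ) b).hasFDerivAt)

lemma virial_quad_fderiv {n : ℕ} (c : Matrix (Fin n) (Fin n) ℝ) (w : Fin n → ℝ) (i : Fin n) :
    fderiv ℝ (fun x : Fin n → ℝ => (1/2 : ℝ) * ∑ a, ∑ b, x a * c a b * x b) w (Pi.single i 1)
      = (1/2) * ((∑ a, w a * c a i) + ∑ b, w b * c i b) := by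
  rw [(virial_quad_hasFDerivAt c w).fderiv]
  simp [ContinuousLinearMap.sum_apply, Pi.single_apply, mul_ite, Finset.sum_add_distrib]
  ring

-- directional derivative of q-dependent quadratic form
lemma virial_quadq_fderiv {n : ℕ} (g : Fin n → Fin n → (Fin n → ℝ) → ℝ) (x : Fin n → ℝ)
    (hg : ∀ a b, DifferentiableAt ℝ (g a b) x) (y u : Fin n → ℝ) :
    fderiv ℝ (fun q' => (1/2 : ℝ) * ∑ a, ∑ b, y a * g a b q' * y b) x u
      = (1/2) * ∑ a, ∑ b, y a * (fderiv ℝ (g a b) x u) * y b := by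
  have h : HasFDerivAt (fun q' => (1/2 : ℝ) * ∑ a, ∑ b, y a * g a b q' * y b)
      ((1/2 : ℝ) • ∑ a : Fin n, ∑ b : Fin n, (y b • (y a • fderiv ℝ (g a b) x))) x := by
    apply HasFDerivAt.const_mul
    apply HasFDerivAt.fun_sum
    intro a _
    apply HasFDerivAt.fun_sum
    intro b _
    exact (((hg a b).hasFDerivAt).const_mul (y a)).mul_const (y b)
  rw [h.fderiv]
  simp only [ContinuousLinearMap.smul_apply, ContinuousLinearMap.sum_apply, smul_eq_mul]
  congr 1
  apply Finset.sum_congr rfl; intro a _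
  apply Finset.sum_congr rfl; intro b _
  ring

lemma virial_clm_apply_eq_sum {n : ℕ} (Φ : (Fin n → ℝ) →L[ℝ] ℝ) (x : Fin n → ℝ) :
    Φ x = ∑ j, x j * Φ (Pi.single j 1) := by
  conv_lhs => rw [pi_eq_sum_univ x]
  rw [map_sum]
  apply Finset.sum_congr rfl; intro j _
  rw [_root_.map_smul, smul_eq_mul]
  congr 2
  funext k
  simp [Pi.single_apply, eq_comm]


/-- Virial theorem in Lagrangian form for a mechanical Lagrangian
`L(q,v) = (1/2) vᵀ M(q) v − V(q)`: for the complete lift `D^c` of `D = fⁱ ∂/∂qᵢ`, along any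
bounded solution of the Euler–Lagrange equations with bounded velocity (and assuming the
limits exist), `⟨D^c(T)⟩ = ⟨D(V)⟩`, where `T(q,v) = (1/2) vᵀ M(q) v`. -/
theorem virial_mechanical_lagrangian (n : ℕ)
    (M : (Fin n → ℝ) → Matrix (Fin n) (Fin n) ℝ)
    (hMc : ∀ i j, ContDiff ℝ (⊤ : ℕ∞) (fun q => M q i j))
    (hMsymm : ∀ q, (M q).IsSymm) (hMpos : ∀ q, (M q).PosDef)
    (V : (Fin n → ℝ) → ℝ) (hV : ContDiff ℝ (⊤ : ℕ∞) V)
    (f : Fin n → (Fin n → ℝ) → ℝ) (hf : ∀ i, ContDiff ℝ (⊤ : ℕ∞) (f i))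
    (T L : (Fin n → ℝ) → (Fin n → ℝ) → ℝ)
    (hT : ∀ q v, T q v = (1/2) * ∑ i, ∑ j, v i * M q i j * v j)
    (hLdef : ∀ q v, L q v = T q v - V q)
    (q v : ℝ → Fin n → ℝ)
    (hqv : ∀ t i, HasDerivAt (fun s => q s i) (v t i) t)
    -- Euler–Lagrange equations: d/dt (∂L/∂vᵢ) = ∂L/∂qᵢ
    (hEL : ∀ t i, HasDerivAt
      (fun s => (fderiv ℝ (fun v' => L (q s) v') (v s)) (Pi.single i 1))
      ((fderiv ℝ (fun q' => L q' (v t)) (q t)) (Pi.single i 1)) t)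
    -- bounded solution with bounded velocity
    (hbq : ∃ K : ℝ, ∀ t i, |q t i| ≤ K)
    (hbv : ∃ K : ℝ, ∀ t i, |v t i| ≤ K)
    (A B : ℝ)
    -- time average of D^c(T) = fⁱ ∂T/∂qᵢ + vʲ(∂fⁱ/∂qʲ) ∂T/∂vᵢ
    (hA : Tendsto (fun τ : ℝ => (1 / τ) * ∫ t in (0:ℝ)..τ,
      (∑ i, f i (q t) * (fderiv ℝ (fun q' => T q' (v t)) (q t)) (Pi.single i 1))
      + ∑ i, (∑ j, v t j * (fderiv ℝ (f i) (q t)) (Pi.single j 1)) *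
          (fderiv ℝ (fun v' => T (q t) v') (v t)) (Pi.single i 1))
      atTop (nhds A))
    -- time average of D(V) = fⁱ ∂V/∂qᵢ
    (hB : Tendsto (fun τ : ℝ => (1 / τ) * ∫ t in (0:ℝ)..τ,
      ∑ i, f i (q t) * (fderiv ℝ V (q t)) (Pi.single i 1)) atTop (nhds B)) :
    A = B := by
  -- integrands
  set iA : ℝ → ℝ := fun t =>
      (∑ i, f i (q t) * (fderiv ℝ (fun q' => T q' (v t)) (q t)) (Pi.single i 1))
      + ∑ i, (∑ j, v t j * (fderiv ℝ (f i) (q t)) (Pi.single j 1)) *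
          (fderiv ℝ (fun v' => T (q t) v') (v t)) (Pi.single i 1) with hiA
  set iB : ℝ → ℝ := fun t =>
      ∑ i, f i (q t) * (fderiv ℝ V (q t)) (Pi.single i 1) with hiB
  -- differentiability of T in q
  have hTfun : ∀ y : Fin n → ℝ, (fun q' => T q' y)
      = fun q' => (1/2 : ℝ) * ∑ a, ∑ b, y a * M q' a b * y b := by
    intro y; funext q'; rw [hT]
  have hVd : Differentiable ℝ V := hV.differentiable (by simp)
  have hMd : ∀ a b, Differentiable ℝ (fun x => M x a b) := fun a b => (hMc a b).differentiable (by simp)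
  have hTdiffq : ∀ (y x : Fin n → ℝ), DifferentiableAt ℝ (fun q' => T q' y) x := by
    intro y x
    rw [hTfun]
    exact ((DifferentiableAt.fun_sum fun a _ => DifferentiableAt.fun_sum fun b _ =>
      (((hMd a b) x).const_mul (y a)).mul_const (y b))).const_mul (1/2)
  -- ∂L/∂v = ∂T/∂v, explicit
  have hLvT : ∀ x y : Fin n → ℝ,
      fderiv ℝ (fun v' => L x v') y = fderiv ℝ (fun v' => T x v') y := by
    intro x y
    have : (fun v' => L x v') = fun v' => T x v' - V x := funext fun v' => hLdef x v'
    rw [this, fderiv_sub_const]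
  have hTv : ∀ (x y : Fin n → ℝ) (i : Fin n),
      fderiv ℝ (fun v' => T x v') y (Pi.single i 1)
        = (1/2) * ((∑ a, y a * M x a i) + ∑ b, y b * M x i b) := by
    intro x y i
    have : (fun v' => T x v') = fun v' : Fin n → ℝ => (1/2 : ℝ) * ∑ a, ∑ b, v' a * M x a b * v' b :=
      funext fun v' => hT x v'
    rw [this, virial_quad_fderiv]
  -- ∂L/∂q = ∂T/∂q − ∂V/∂q
  have hLq : ∀ (x y : Fin n → ℝ) (i : Fin n),
      fderiv ℝ (fun q' => L q' y) x (Pi.single i 1)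
        = fderiv ℝ (fun q' => T q' y) x (Pi.single i 1) - fderiv ℝ V x (Pi.single i 1) := by
    intro x y i
    have h1 : (fun q' => L q' y) = fun q' => T q' y - V q' := funext fun q' => hLdef q' y
    rw [h1, fderiv_fun_sub (hTdiffq y x) (hVd x), ContinuousLinearMap.sub_apply]
  -- ∂T/∂q explicit
  have hTq : ∀ (x y : Fin n → ℝ) (i : Fin n),
      fderiv ℝ (fun q' => T q' y) x (Pi.single i 1)
        = (1/2) * ∑ a, ∑ b, y a * (fderiv ℝ (fun q'' => M q'' a b) x (Pi.single i 1)) * y b := by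
    intro x y i
    rw [hTfun y, virial_quadq_fderiv (fun a b x => M x a b) x (fun a b => (hMd a b) x)]
  -- the virial function G
  set G : ℝ → ℝ := fun t => ∑ i, f i (q t) *
      (fderiv ℝ (fun v' => L (q t) v') (v t)) (Pi.single i 1) with hGdef
  have hq : ∀ t, HasDerivAt q (v t) t := fun t => hasDerivAt_pi.2 (hqv t)
  have hfq : ∀ (i : Fin n) (t : ℝ), HasDerivAt (fun s => f i (q s))
      (∑ j, v t j * fderiv ℝ (f i) (q t) (Pi.single j 1)) t := by
    intro i t
    have h := (((hf i).differentiable (by simp) (q t)).hasFDerivAt).comp_hasDerivAt t (hq t)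
    rwa [virial_clm_apply_eq_sum (fderiv ℝ (f i) (q t)) (v t)] at h
  have hG : ∀ t : ℝ, HasDerivAt G (iA t - iB t) t := by
    intro t
    have h : HasDerivAt G (∑ i,
        ((∑ j, v t j * fderiv ℝ (f i) (q t) (Pi.single j 1)) *
          (fderiv ℝ (fun v' => L (q t) v') (v t)) (Pi.single i 1)
        + f i (q t) * (fderiv ℝ (fun q' => L q' (v t)) (q t)) (Pi.single i 1))) t := by
      apply HasDerivAt.fun_sum
      intro i _
      exact (hfq i t).mul (hEL t i)
    convert h using 1
    simp only [hiA, hiB, hLvT, hLq, mul_sub]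
    rw [Finset.sum_add_distrib, Finset.sum_sub_distrib]
    ring
  -- boundedness of the trajectory
  obtain ⟨Kq, hKq⟩ := hbq
  obtain ⟨Kv, hKv⟩ := hbv
  have hqmem : ∀ t, q t ∈ Metric.closedBall (0 : Fin n → ℝ) (max Kq 0) := by
    intro t
    rw [Metric.mem_closedBall, dist_zero_right,
      pi_norm_le_iff_of_nonneg (le_max_right _ _)]
    intro i
    exact le_trans (by rw [Real.norm_eq_abs]; exact hKq t i) (le_max_left _ _)
  have hvmem : ∀ t, v t ∈ Metric.closedBall (0 : Fin n → ℝ) (max Kv 0) := by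
    intro t
    rw [Metric.mem_closedBall, dist_zero_right,
      pi_norm_le_iff_of_nonneg (le_max_right _ _)]
    intro i
    exact le_trans (by rw [Real.norm_eq_abs]; exact hKv t i) (le_max_left _ _)
  set S : Set ((Fin n → ℝ) × (Fin n → ℝ)) :=
    Metric.closedBall (0 : Fin n → ℝ) (max Kq 0) ×ˢ Metric.closedBall (0 : Fin n → ℝ) (max Kv 0)
    with hSdef
  have hS : IsCompact S := (isCompact_closedBall _ _).prod (isCompact_closedBall _ _)
  have hmemS : ∀ t, (q t, v t) ∈ S := fun t => ⟨hqmem t, hvmem t⟩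
  -- continuity facts
  have cDM : ∀ (a b i : Fin n), Continuous fun x : Fin n → ℝ =>
      fderiv ℝ (fun q'' => M q'' a b) x (Pi.single i 1) :=
    fun a b i => ((hMc a b).continuous_fderiv (by simp)).clm_apply continuous_const
  have cDf : ∀ (i j : Fin n), Continuous fun x => fderiv ℝ (f i) x (Pi.single j 1) :=
    fun i j => ((hf i).continuous_fderiv (by simp)).clm_apply continuous_const
  have cDV : ∀ i : Fin n, Continuous fun x => fderiv ℝ V x (Pi.single i 1) :=
    fun i => (hV.continuous_fderiv (by simp)).clm_apply continuous_const
  -- continuous models for the integrands and for G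
  set HA : (Fin n → ℝ) × (Fin n → ℝ) → ℝ := fun z =>
    (∑ i, f i z.1 * ((1/2 : ℝ) * ∑ a, ∑ b,
        z.2 a * (fderiv ℝ (fun q'' => M q'' a b) z.1 (Pi.single i 1)) * z.2 b))
    + ∑ i, (∑ j, z.2 j * fderiv ℝ (f i) z.1 (Pi.single j 1)) *
        ((1/2 : ℝ) * ((∑ a, z.2 a * M z.1 a i) + ∑ b, z.2 b * M z.1 i b)) with hHA
  set HB : (Fin n → ℝ) × (Fin n → ℝ) → ℝ := fun z =>
    ∑ i, f i z.1 * fderiv ℝ V z.1 (Pi.single i 1) with hHB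
  set HG : (Fin n → ℝ) × (Fin n → ℝ) → ℝ := fun z =>
    ∑ i, f i z.1 * ((1/2 : ℝ) * ((∑ a, z.2 a * M z.1 a i) + ∑ b, z.2 b * M z.1 i b)) with hHG
  have hiAH : iA = fun t => HA (q t, v t) := by
    funext t
    rw [hiA, hHA]
    simp only [hTq, hTv]
  have hiBH : iB = fun t => HB (q t, v t) := by funext t; rw [hiB, hHB]
  have hGH : ∀ t, G t = HG (q t, v t) := by
    intro t
    rw [hGdef, hHG]
    simp only [hLvT, hTv]
  have cHA : Continuous HA := by
    apply Continuous.add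
    · apply continuous_finset_sum; intro i _
      apply Continuous.mul (((hf i).continuous).comp continuous_fst)
      apply Continuous.mul continuous_const
      apply continuous_finset_sum; intro a _
      apply continuous_finset_sum; intro b _
      exact (((continuous_apply a).comp continuous_snd).mul
        ((cDM a b i).comp continuous_fst)).mul ((continuous_apply b).comp continuous_snd)
    · apply continuous_finset_sum; intro i _
      apply Continuous.mul
      · apply continuous_finset_sum; intro j _
        exact ((continuous_apply j).comp continuous_snd).mul ((cDf i j).comp continuous_fst)
      · apply Continuous.mul continuous_const
        apply Continuous.add
        · apply continuous_finset_sum; intro a _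
          exact ((continuous_apply a).comp continuous_snd).mul
            (((hMc a i).continuous).comp continuous_fst)
        · apply continuous_finset_sum; intro b _
          exact ((continuous_apply b).comp continuous_snd).mul
            (((hMc i b).continuous).comp continuous_fst)
  have cHB : Continuous HB := by
    apply continuous_finset_sum; intro i _
    exact (((hf i).continuous).comp continuous_fst).mul ((cDV i).comp continuous_fst)
  have cHG : Continuous HG := by
    apply continuous_finset_sum; intro i _
    apply Continuous.mul (((hf i).continuous).comp continuous_fst)
    apply Continuous.mul continuous_const
    apply Continuous.add
    · apply continuous_finset_sum; intro a _
      exact ((continuous_apply a).comp continuous_snd).mul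
        (((hMc a i).continuous).comp continuous_fst)
    · apply continuous_finset_sum; intro b _
      exact ((continuous_apply b).comp continuous_snd).mul
        (((hMc i b).continuous).comp continuous_fst)
  -- measurability of t ↦ (q t, v t)
  have cq : Continuous q := by
    apply continuous_pi
    intro i
    have : Differentiable ℝ fun t => q t i := fun t => (hqv t i).differentiableAt
    exact this.continuous
  have mv : Measurable v := by
    apply measurable_pi_lambda
    intro i
    have hvi : (fun t => v t i) = deriv fun s => q s i := funext fun t => ((hqv t i).deriv).symm
    rw [hvi]
    exact measurable_deriv _
  have mφ : Measurable fun t => (q t, v t) := cq.measurable.prodMk mv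
  -- integrability from boundedness + measurability
  have hvol : ∀ τ : ℝ, volume (Set.uIoc (0:ℝ) τ) < ⊤ := fun τ => by
    rw [Set.uIoc]; exact measure_Ioc_lt_top
  have hint : ∀ (H : (Fin n → ℝ) × (Fin n → ℝ) → ℝ) (C : ℝ), Continuous H →
      (∀ z ∈ S, ‖H z‖ ≤ C) →
      ∀ τ : ℝ, IntervalIntegrable (fun t => H (q t, v t)) volume 0 τ := by
    intro H C hH hC τ
    rw [intervalIntegrable_iff]
    apply Integrable.mono' (g := fun _ => C) (integrableOn_const (C := C) (hvol τ).ne enorm_ne_top)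
      ((hH.measurable.comp mφ).aestronglyMeasurable)
    exact ae_of_all _ fun t => hC _ (hmemS t)
  obtain ⟨CA, hCA⟩ := hS.exists_bound_of_continuousOn cHA.continuousOn
  obtain ⟨CB, hCB⟩ := hS.exists_bound_of_continuousOn cHB.continuousOn
  obtain ⟨CG, hCG⟩ := hS.exists_bound_of_continuousOn cHG.continuousOn
  have intA : ∀ τ : ℝ, IntervalIntegrable iA volume 0 τ := by
    intro τ; rw [hiAH]; exact hint HA CA cHA hCA τ
  have intB : ∀ τ : ℝ, IntervalIntegrable iB volume 0 τ := by
    intro τ; rw [hiBH]; exact hint HB CB cHB hCB τ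
  -- fundamental theorem of calculus
  have key : ∀ τ : ℝ, (∫ t in (0:ℝ)..τ, iA t) - ∫ t in (0:ℝ)..τ, iB t = G τ - G 0 := by
    intro τ
    rw [← intervalIntegral.integral_sub (intA τ) (intB τ)]
    exact integral_eq_sub_of_hasDerivAt (fun t _ => hG t) ((intA τ).sub (intB τ))
  -- boundedness of G
  have hGb : ∀ t, |G t| ≤ CG := by
    intro t
    rw [hGH t]
    exact hCG _ (hmemS t)
  -- conclude
  have h1 : Tendsto (fun τ : ℝ => (1/τ) * (G τ - G 0)) atTop (nhds (A - B)) := by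
    have h := hA.sub hB
    have heq : (fun τ : ℝ => (1/τ) * (∫ t in (0:ℝ)..τ, iA t)
        - (1/τ) * ∫ t in (0:ℝ)..τ, iB t) = fun τ : ℝ => (1/τ) * (G τ - G 0) := by
      funext τ
      rw [← mul_sub, key τ]
    rwa [heq] at h
  have h0 : Tendsto (fun τ : ℝ => (1/τ) * (G τ - G 0)) atTop (nhds 0) := by
    apply squeeze_zero_norm' (a := fun τ : ℝ => (1/τ) * (CG + CG))
    · filter_upwards [eventually_ge_atTop (1:ℝ)] with τ hτ
      have hτ0 : (0:ℝ) < τ := lt_of_lt_of_le one_pos hτ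
      rw [Real.norm_eq_abs, abs_mul, abs_of_pos (by positivity : (0:ℝ) < 1/τ)]
      apply mul_le_mul_of_nonneg_left _ (le_of_lt (by positivity))
      rw [sub_eq_add_neg]
      exact le_trans (abs_add_le _ _) (by rw [abs_neg]; exact add_le_add (hGb τ) (hGb 0))
    · have h2 := (tendsto_inv_atTop_zero (𝕜 := ℝ)).mul_const (CG + CG)
      simpa [one_div] using h2
  have hAB : A - B = 0 := tendsto_nhds_unique h1 h0
  linarith
end
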